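/- arXiv:1701.06148 — 3 statements merged into one kernel-verified Lean document; each statement's English description precedes it below -/
import Mathlib

section
/- For 0 < ν ≤ 1/10, with V(x) = x⁴/4 − x³/3 + ν(x − x²/2), one has V(1) < V(−√ν); moreover x = 1 is the unique strict global minimizer of V on ℝ, i.e. V(x) > V(1) for all x ≠ 1. Hence the active state x_A = 1 is a deeper potential well than the quiescent state x_Q = −√ν (asymmetric bistability). -/
/-- The single-node potential `V(x) = x⁴/4 - x³/3 + ν(x - x²/2)`. -/
noncomputable def V (ν x : ℝ) : ℝ := x ^ 4 / 4 - x ^ 3 / 3 + ν * (x - x ^ 2 / 2)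

/-! Since `V' x = (x - 1)(x² - ν)`, the difference `V x - V 1` has a double root at `x = 1` and
factors as `(x - 1)² (3x² + 2x + 1 - 6ν) / 12`. The quadratic factor is at least `2/3 - 6ν`,
so it is positive as soon as `ν < 1/9`, and then `1` is the strict global minimizer of `V`. -/

theorem V_sub_V_one (ν x : ℝ) :
    V ν x - V ν 1 = (x - 1) ^ 2 * (3 * x ^ 2 + 2 * x + 1 - 6 * ν) / 12 := by
  unfold V
  ring

theorem two_thirds_le_three_mul_sq_add_two_mul_add_one (x : ℝ) :
    2 / 3 ≤ 3 * x ^ 2 + 2 * x + 1 := by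
  nlinarith [sq_nonneg (3 * x + 1)]

theorem V_one_lt_V {ν : ℝ} (hν : ν < 1 / 9) {x : ℝ} (hx : x ≠ 1) : V ν 1 < V ν x := by
  have hsq : 0 < (x - 1) ^ 2 := sq_pos_of_ne_zero (sub_ne_zero.mpr hx)
  have hquad : 0 < 3 * x ^ 2 + 2 * x + 1 - 6 * ν := by
    linarith [two_thirds_le_three_mul_sq_add_two_mul_add_one x]
  have hdiff : 0 < V ν x - V ν 1 := by
    rw [V_sub_V_one]
    positivity
  linarith

theorem active_state_deeper_general {ν : ℝ} (hν1 : ν ≤ 1 / 10) :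
    V ν 1 < V ν (-Real.sqrt ν) ∧ ∀ x : ℝ, x ≠ 1 → V ν 1 < V ν x := by
  have hν : ν < 1 / 9 := by linarith
  have hQ : -Real.sqrt ν ≠ 1 := by linarith [Real.sqrt_nonneg ν]
  exact ⟨V_one_lt_V hν hQ, fun _ => V_one_lt_V hν⟩

/-- For `0 < ν ≤ 1/10` one has `V(1) < V(-√ν)`, and `x = 1` is the unique strict
global minimizer of `V` on `ℝ`: the active state is a deeper well than the
quiescent state (asymmetric bistability). -/
theorem active_state_deeper {ν : ℝ} (hν0 : 0 < ν) (hν1 : ν ≤ 1 / 10) :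
    V ν 1 < V ν (-Real.sqrt ν) ∧ ∀ x : ℝ, x ≠ 1 → V ν 1 < V ν x :=
  active_state_deeper_general hν1
end

section
/- If (x₁,x₂) is an equilibrium of the two-node coupled system with x₁ ≠ x₂, then 2β = (f(x₁,ν) − f(x₂,ν))/(x₁ − x₂), and consequently 2β ≤ 1/3 + ν. -/
/-- The single-node vector field `f(x,ν) = -(x-1)(x²-ν)`. -/
noncomputable def f (ν x : ℝ) : ℝ := -((x - 1) * (x ^ 2 - ν))

/-- `(x₁,x₂)` is an equilibrium of the two-node bidirectionally coupled system. -/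
def IsEquilibrium (ν β x₁ x₂ : ℝ) : Prop :=
  f ν x₁ + β * (x₂ - x₁) = 0 ∧ f ν x₂ + β * (x₁ - x₂) = 0

/-!
Subtracting the two equilibrium equations gives `2β (x₁ - x₂) = f(x₁) - f(x₂)`, so off the
diagonal `2β` is the slope of the chord of the cubic `f` through `x₁` and `x₂`. That slope is
`ν - (x₁² + x₁x₂ + x₂² - x₁ - x₂)`, and the quadratic form is at least `-1/3`, its value at
`x₁ = x₂ = 1/3`.
-/

theorem neg_one_third_le_sq_add_mul_add_sq_sub_add (x y : ℝ) :
    -1 / 3 ≤ x ^ 2 + x * y + y ^ 2 - (x + y) := by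
  -- `4 (x² + xy + y² - x - y) + 4/3 = (x - y)² + 3 (x + y - 2/3)²`
  nlinarith [sq_nonneg (x - y), sq_nonneg (x + y - 2 / 3)]

theorem f_sub_f (ν x y : ℝ) :
    f ν x - f ν y = (x - y) * (ν - (x ^ 2 + x * y + y ^ 2 - (x + y))) := by
  unfold f
  ring

theorem f_slope_le {ν x y : ℝ} (hne : x ≠ y) : (f ν x - f ν y) / (x - y) ≤ 1 / 3 + ν := by
  rw [f_sub_f, mul_div_cancel_left₀ _ (sub_ne_zero.mpr hne)]
  linarith [neg_one_third_le_sq_add_mul_add_sq_sub_add x y]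

theorem IsEquilibrium.two_mul_mul_sub_eq {ν β x₁ x₂ : ℝ} (heq : IsEquilibrium ν β x₁ x₂) :
    2 * β * (x₁ - x₂) = f ν x₁ - f ν x₂ := by
  obtain ⟨h₁, h₂⟩ := heq
  linarith

/-- If `(x₁,x₂)` is an off-diagonal equilibrium of the two-node coupled system then
`2β = (f(x₁,ν) - f(x₂,ν))/(x₁ - x₂)`, and consequently `2β ≤ 1/3 + ν`. -/
theorem offdiagonal_equilibrium_coupling_bound {ν β x₁ x₂ : ℝ}
    (heq : IsEquilibrium ν β x₁ x₂) (hne : x₁ ≠ x₂) :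
    2 * β = (f ν x₁ - f ν x₂) / (x₁ - x₂) ∧ 2 * β ≤ 1 / 3 + ν := by
  have hslope : 2 * β = (f ν x₁ - f ν x₂) / (x₁ - x₂) :=
    eq_div_of_mul_eq (sub_ne_zero.mpr hne) heq.two_mul_mul_sub_eq
  exact ⟨hslope, hslope ▸ f_slope_le hne⟩
end

section
/- For 0 < ν < 1 and β ≥ 0, the Hessian of the coupled potential Ṽ at the synchronized saddle x_SS = (√ν,√ν) is singular (has determinant zero) if and only if β = √ν − ν; this is the pitchfork bifurcation value β₂ of the separating saddles of the two-node system. -/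
/-- The coupled two-node potential `Ṽ(x₁,x₂) = V(x₁) + V(x₂) + (β/2)(x₁-x₂)²`. -/
noncomputable def Vt (ν β x₁ x₂ : ℝ) : ℝ :=
  V ν x₁ + V ν x₂ + β / 2 * (x₁ - x₂) ^ 2

/-- The Hessian matrix of `Ṽ` at a diagonal point `(x,x)`, built from the second
partial derivatives of `Ṽ`. -/
noncomputable def hessVt (ν β x : ℝ) : Matrix (Fin 2) (Fin 2) ℝ :=
  !![deriv (deriv (fun a => Vt ν β a x)) x,
      deriv (fun a => deriv (fun b => Vt ν β a b) x) x;
    deriv (fun b => deriv (fun a => Vt ν β a b) x) x,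
      deriv (deriv (fun b => Vt ν β x b)) x]

lemma hasDerivAt_V (ν a : ℝ) :
    HasDerivAt (V ν) (a ^ 3 - a ^ 2 + ν * (1 - a)) a := by
  have h := (((hasDerivAt_pow 4 a).div_const 4).sub
      ((hasDerivAt_pow 3 a).div_const 3)).add
      (((hasDerivAt_id a).sub ((hasDerivAt_pow 2 a).div_const 2)).const_mul ν)
  refine h.congr_deriv ?_
  push_cast; ring

lemma hasDerivAt_Vt1 (ν β y a : ℝ) :
    HasDerivAt (fun t => Vt ν β t y) (a ^ 3 - a ^ 2 + ν * (1 - a) + β * (a - y)) a := by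
  have h := (((hasDerivAt_V ν a).add_const (V ν y)).add
      ((((hasDerivAt_id a).sub_const y).pow 2).const_mul (β / 2)))
  refine h.congr_deriv ?_
  simp only [id_eq]; push_cast; ring

lemma hasDerivAt_Vt2 (ν β y b : ℝ) :
    HasDerivAt (fun t => Vt ν β y t) (b ^ 3 - b ^ 2 + ν * (1 - b) + β * (b - y)) b := by
  have h := (((hasDerivAt_V ν b).const_add (V ν y)).add
      ((((hasDerivAt_id b).const_sub y).pow 2).const_mul (β / 2)))
  refine h.congr_deriv ?_
  simp only [id_eq]; push_cast; ring

lemma deriv_Vt1 (ν β y : ℝ) :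
    deriv (fun t => Vt ν β t y) = fun a => a ^ 3 - a ^ 2 + ν * (1 - a) + β * (a - y) := by
  funext a; exact (hasDerivAt_Vt1 ν β y a).deriv

lemma deriv_Vt2 (ν β y : ℝ) :
    deriv (fun t => Vt ν β y t) = fun b => b ^ 3 - b ^ 2 + ν * (1 - b) + β * (b - y) := by
  funext b; exact (hasDerivAt_Vt2 ν β y b).deriv

lemma hasDerivAt_poly (ν β y a : ℝ) :
    HasDerivAt (fun t : ℝ => t ^ 3 - t ^ 2 + ν * (1 - t) + β * (t - y))
      (3 * a ^ 2 - 2 * a - ν + β) a := by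
  have h := (((hasDerivAt_pow 3 a).sub (hasDerivAt_pow 2 a)).add
      (((hasDerivAt_id a).const_sub 1).const_mul ν)).add
      (((hasDerivAt_id a).sub_const y).const_mul β)
  refine h.congr_deriv ?_
  push_cast; ring

lemma hessVt_eq (ν β x : ℝ) :
    hessVt ν β x = !![3 * x ^ 2 - 2 * x - ν + β, -β; -β, 3 * x ^ 2 - 2 * x - ν + β] := by
  have hdiag1 : deriv (deriv (fun a => Vt ν β a x)) x = 3 * x ^ 2 - 2 * x - ν + β := by
    rw [deriv_Vt1]; exact (hasDerivAt_poly ν β x x).deriv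
  have hdiag2 : deriv (deriv (fun b => Vt ν β x b)) x = 3 * x ^ 2 - 2 * x - ν + β := by
    rw [deriv_Vt2]; exact (hasDerivAt_poly ν β x x).deriv
  have hmix1 : deriv (fun a => deriv (fun b => Vt ν β a b) x) x = -β := by
    have heq : (fun a => deriv (fun b => Vt ν β a b) x)
        = fun a => x ^ 3 - x ^ 2 + ν * (1 - x) + β * (x - a) := by
      funext a; exact (hasDerivAt_Vt2 ν β a x).deriv
    rw [heq]
    have h := ((((hasDerivAt_id x).const_sub x).const_mul β).const_add
      (x ^ 3 - x ^ 2 + ν * (1 - x)))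
    have h2 : HasDerivAt (fun a : ℝ => x ^ 3 - x ^ 2 + ν * (1 - x) + β * (x - a)) (-β) x := by
      refine h.congr_deriv ?_; ring
    exact h2.deriv
  have hmix2 : deriv (fun b => deriv (fun a => Vt ν β a b) x) x = -β := by
    have heq : (fun b => deriv (fun a => Vt ν β a b) x)
        = fun b => x ^ 3 - x ^ 2 + ν * (1 - x) + β * (x - b) := by
      funext b; exact (hasDerivAt_Vt1 ν β b x).deriv
    rw [heq]
    have h := ((((hasDerivAt_id x).const_sub x).const_mul β).const_add
      (x ^ 3 - x ^ 2 + ν * (1 - x)))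
    have h2 : HasDerivAt (fun b : ℝ => x ^ 3 - x ^ 2 + ν * (1 - x) + β * (x - b)) (-β) x := by
      refine h.congr_deriv ?_; ring
    exact h2.deriv
  unfold hessVt
  rw [hdiag1, hdiag2, hmix1, hmix2]

/-- For `0 < ν < 1` and `β ≥ 0`, the Hessian of `Ṽ` at the synchronized saddle
`x_SS = (√ν,√ν)` is singular iff `β = √ν - ν`, the pitchfork bifurcation value `β₂`. -/
theorem hessian_singular_at_pitchfork {ν β : ℝ} (hν0 : 0 < ν) (hν1 : ν < 1)
    (hβ : 0 ≤ β) :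
    (hessVt ν β (Real.sqrt ν)).det = 0 ↔ β = Real.sqrt ν - ν := by
  set s := Real.sqrt ν with hs
  have hs2 : s ^ 2 = ν := Real.sq_sqrt hν0.le
  have hsν : ν < s := by
    have hs0 : 0 < s := Real.sqrt_pos.mpr hν0
    nlinarith [hs2]
  have hdet : (hessVt ν β s).det = 4 * (ν - s) * (ν - s + β) := by
    rw [hessVt_eq, Matrix.det_fin_two_of]
    nlinarith [hs2]
  rw [hdet]
  constructor
  · intro h
    have h4 : (ν - s) ≠ 0 := by linarith
    have : ν - s + β = 0 := by
      rcases mul_eq_zero.mp h with h1 | h2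
      · rcases mul_eq_zero.mp h1 with h1 | h1
        · norm_num at h1
        · exact absurd h1 h4
      · exact h2
    linarith
  · intro h; rw [h]; ring
end
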